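/- arXiv:2204.01581 — 2 statements merged into one kernel-verified Lean document; each statement's English description precedes it below -/
import Mathlib

section
/- For all N, h ∈ ℕ one has the decomposition Δ(N,h) = C_{Λ,Λ_N}(N,h) − ∑_{q ≤ N} (Λ̂_N(q)/φ(q)) c_q(h) ∑_{n ≤ N} Λ(n) c_q(n) − ℛ(N,h), where ℛ(N,h) = ∑_{n ≤ N} ∑_{q ≤ N, gcd(n,q) > 1} Λ(n) Λ̂_N(q) ( c_q(n+h) − c_q(n) c_q(h) / φ(q) ). -/
open Finset

/-- The Ramanujan sum `c_q(n) = ∑_{1 ≤ j ≤ q, gcd(j,q)=1} exp(2πi j n / q)`. -/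
noncomputable def cq (q : ℕ) (n : ℤ) : ℂ :=
  ∑ j ∈ (Finset.Icc 1 q).filter (fun j => Nat.Coprime j q),
    Complex.exp (2 * Real.pi * Complex.I * j * n / q)

/-- The incomplete von Mangoldt function `Λ_N(n) = -∑_{d ≤ N, d ∣ n} μ(d) log d`. -/
noncomputable def LamN (N n : ℕ) : ℝ :=
  -∑ d ∈ (Finset.Icc 1 N).filter (fun d => d ∣ n),
    (ArithmeticFunction.moebius d : ℝ) * Real.log d

/-- The correlation `C_{Λ,Λ_N}(N, n) = ∑_{m ≤ N} Λ(m) Λ_N(m + n)`. -/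
noncomputable def corr (N n : ℕ) : ℝ :=
  ∑ m ∈ Finset.Icc 1 N, ArithmeticFunction.vonMangoldt m * LamN N (m + n)

/-- The Ramanujan coefficient `Λ̂_N(q) = -(μ(q)/q) ∑_{d ≤ N/q, gcd(d,q)=1} μ(d) log(dq)/d`. -/
noncomputable def LamHat (N q : ℕ) : ℝ :=
  -((ArithmeticFunction.moebius q : ℝ) / q) *
    ∑ d ∈ (Finset.Icc 1 (N / q)).filter (fun d => Nat.Coprime d q),
      (ArithmeticFunction.moebius d : ℝ) * Real.log (d * q) / d

/-- `ℤ_q^* = {m ∈ ℕ ∩ [1,q] : gcd(m,q) = 1}`. -/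
def Zstar (q : ℕ) : Finset ℕ := (Finset.Icc 1 q).filter (fun m => Nat.Coprime m q)

/-- `ψ(N; q, k) = ∑_{n ≤ N, n ≡ k (mod q)} Λ(n)`. -/
noncomputable def psi (N q k : ℕ) : ℝ :=
  ∑ n ∈ (Finset.Icc 1 N).filter (fun n => n % q = k % q),
    ArithmeticFunction.vonMangoldt n

/-- `δ(h; q, k) = c_q(k+h) - (μ(q)/φ(q)) c_q(h)`. -/
noncomputable def dev (h q k : ℕ) : ℂ :=
  cq q ((k : ℤ) + h) - (ArithmeticFunction.moebius q : ℂ) / (Nat.totient q : ℂ) * cq q h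

/-- `Δ(N, h) = ∑_{q ≤ N} Λ̂_N(q) ∑_{k ∈ ℤ_q^*} ψ(N;q,k) δ(h;q,k)`. -/
noncomputable def Delta (N h : ℕ) : ℂ :=
  ∑ q ∈ Finset.Icc 1 N, (LamHat N q : ℂ) *
    ∑ k ∈ Zstar q, (psi N q k : ℂ) * dev h q k

/-- `S_N(q, k; r) = ∑_{n ≤ N, n ≡ k (mod q)} c_r(n)`. -/
noncomputable def SN (N q : ℕ) (k : ℤ) (r : ℕ) : ℂ :=
  ∑ n ∈ (Finset.Icc 1 N).filter (fun n : ℕ => (n : ℤ) % (q : ℤ) = k % (q : ℤ)), cq r n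

/-- The remainder term `ℛ(N,h)`. -/
noncomputable def RR (N h : ℕ) : ℂ :=
  ∑ n ∈ Finset.Icc 1 N, ∑ q ∈ (Finset.Icc 1 N).filter (fun q => 1 < Nat.gcd n q),
    (ArithmeticFunction.vonMangoldt n : ℂ) * (LamHat N q : ℂ) *
      (cq q ((n : ℤ) + h) - cq q (n : ℤ) * cq q (h : ℤ) / (Nat.totient q : ℂ))

/-!
Grouping `m / d` by its reduced denominator gives `∑_{e ∣ d} c_e(m) = d · [d ∣ m]`; inserting this
into `Λ_N(m) = -∑_{d ≤ N, d ∣ m} μ(d) log d` and collecting the `d` that are multiples of `q`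
yields the finite Ramanujan expansion `Λ_N(m) = ∑_{q ≤ N} Λ̂_N(q) c_q(m)`. Hence the double sum
over `n, q ≤ N` of `Λ(n) Λ̂_N(q) (c_q(n+h) - c_q(n) c_q(h) / φ(q))` equals
`C_{Λ,Λ_N}(N,h)` minus the main term. Its pairs with `gcd(n,q) > 1` form `ℛ(N,h)`, and its
coprime pairs form `Δ(N,h)`: sorting such `n` into the residue classes `k ∈ ℤ_q^*` produces the
`ψ(N;q,k)`, and `c_q(n) = μ(q)` turns the summand into `δ(h;q,k)`.
-/

open ArithmeticFunction Complex
open scoped Real ArithmeticFunction.Moebius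

lemma cq_eq_of_modEq {q : ℕ} {a b : ℤ} (hab : a ≡ b [ZMOD q]) : cq q a = cq q b := by
  obtain ⟨t, ht⟩ := Int.modEq_iff_dvd.mp hab
  refine sum_congr rfl fun j hj => ?_
  have hq : (q : ℂ) ≠ 0 := by
    have := (mem_Icc.mp (mem_filter.mp hj).1)
    exact_mod_cast (by omega : q ≠ 0)
  have hb : (b : ℂ) = a + q * t := by rw [← sub_eq_iff_eq_add']; exact_mod_cast ht
  rw [hb, show 2 * π * I * j * (a + q * t) / q = 2 * π * I * j * a / q + (j * t : ℤ) * (2 * π * I)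
    by push_cast; field_simp, exp_add, exp_int_mul_two_pi_mul_I, mul_one]

lemma sum_Icc_one_eq_sum_range {M : Type*} [AddCommGroup M] {f : ℕ → M} {d : ℕ} (hf : f d = f 0) :
    ∑ j ∈ Icc 1 d, f j = ∑ j ∈ range d, f j := by
  have h := (sum_range_succ f d).symm.trans (sum_range_succ' f d)
  rw [hf, add_left_inj] at h
  rw [h, ← Ico_add_one_right_eq_Icc, sum_Ico_eq_sum_range]
  simp [add_comm]

lemma sum_Icc_exp_eq_ite (d : ℕ) (n : ℤ) :
    ∑ j ∈ Icc 1 d, exp (2 * π * I * j * n / d) = if (d : ℤ) ∣ n then (d : ℂ) else 0 := by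
  rcases d.eq_zero_or_pos with rfl | hd
  · simp
  set ζ := exp (2 * π * I / d) with hζdef
  have hζ : IsPrimitiveRoot ζ d := isPrimitiveRoot_exp d hd.ne'
  have hterm (j : ℕ) : exp (2 * π * I * j * n / d) = (ζ ^ n) ^ j := by
    rw [← zpow_natCast, ← zpow_mul, hζdef, ← exp_int_mul]
    push_cast
    ring_nf
  have hzd : (ζ ^ n) ^ d = 1 := by
    rw [← zpow_natCast, ← zpow_mul, mul_comm, zpow_mul, zpow_natCast, hζ.pow_eq_one, one_zpow]
  rw [sum_congr rfl fun j _ => hterm j, sum_Icc_one_eq_sum_range (by rw [hzd, pow_zero])]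
  split_ifs with hdn
  · simp [(hζ.zpow_eq_one_iff_dvd n).mpr hdn]
  · rw [geom_sum_eq (mt (hζ.zpow_eq_one_iff_dvd n).mp hdn), hzd, sub_self, zero_div]

/-- Each fraction `m / d` with `1 ≤ m ≤ d` is `j / e` in lowest terms for exactly one `e ∣ d`. -/
lemma sum_divisors_sum_coprime_eq_sum_Icc {M : Type*} [AddCommMonoid M] (d : ℕ) (g : ℚ → M) :
    ∑ e ∈ d.divisors, ∑ j ∈ Icc 1 e with j.Coprime e, g (j / e) = ∑ m ∈ Icc 1 d, g (m / d) := by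
  rw [sum_sigma']
  refine sum_nbij' (fun p => p.2 * (d / p.1)) (fun m => ⟨d / m.gcd d, m / m.gcd d⟩) ?_ ?_ ?_ ?_ ?_
  · rintro ⟨e, j⟩ h
    simp only [mem_sigma, Nat.mem_divisors, mem_filter, mem_Icc] at h ⊢
    obtain ⟨⟨hed, hd⟩, ⟨hj1, hje⟩, -⟩ := h
    have : 0 < d / e := Nat.div_pos (Nat.le_of_dvd (Nat.pos_of_ne_zero hd) hed) (by omega)
    exact ⟨Nat.mul_pos hj1 this, (Nat.mul_le_mul_right _ hje).trans (Nat.mul_div_cancel' hed).le⟩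
  · intro m h
    simp only [mem_sigma, Nat.mem_divisors, mem_filter, mem_Icc] at h ⊢
    have hg : 0 < m.gcd d := Nat.gcd_pos_of_pos_left d h.1
    exact ⟨⟨Nat.div_dvd_of_dvd (Nat.gcd_dvd_right m d), by omega⟩,
      ⟨Nat.div_pos (Nat.gcd_le_left d h.1) hg, Nat.div_le_div_right h.2⟩,
      Nat.coprime_div_gcd_div_gcd hg⟩
  · rintro ⟨e, j⟩ h
    simp only [mem_sigma, Nat.mem_divisors, mem_filter, mem_Icc] at h
    obtain ⟨⟨hed, hd⟩, ⟨hj1, hje⟩, hco⟩ := h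
    have hde : 0 < d / e := Nat.div_pos (Nat.le_of_dvd (Nat.pos_of_ne_zero hd) hed) (by omega)
    have hgcd : (j * (d / e)).gcd d = d / e := by
      conv_lhs => rhs; rw [← Nat.mul_div_cancel' hed]
      rw [Nat.gcd_mul_right, hco, one_mul]
    simp only [hgcd, Nat.div_div_self hed hd, Nat.mul_div_cancel _ hde]
  · intro m h
    simp only [mem_Icc] at h
    simp only [Nat.div_div_self (Nat.gcd_dvd_right m d) (by omega),
      Nat.div_mul_cancel (Nat.gcd_dvd_left m d)]
  · rintro ⟨e, j⟩ h
    simp only [mem_sigma, Nat.mem_divisors, mem_filter, mem_Icc] at h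
    obtain ⟨⟨⟨k, rfl⟩, hd⟩, ⟨hj1, hje⟩, -⟩ := h
    have : (e : ℚ) ≠ 0 := by exact_mod_cast (by omega : e ≠ 0)
    have : (k : ℚ) ≠ 0 := by exact_mod_cast (by rintro rfl; simp at hd)
    dsimp only
    rw [Nat.mul_div_cancel_left _ (by omega)]
    push_cast
    field_simp

lemma sum_divisors_cq (d : ℕ) (n : ℤ) :
    ∑ e ∈ d.divisors, cq e n = if (d : ℤ) ∣ n then (d : ℂ) else 0 := by
  rw [← sum_Icc_exp_eq_ite]
  convert sum_divisors_sum_coprime_eq_sum_Icc d (fun x : ℚ => exp (2 * π * I * x * n)) using 1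
  · refine sum_congr rfl fun e _ => sum_congr rfl fun j _ => ?_
    push_cast
    ring_nf
  · refine sum_congr rfl fun m _ => ?_
    push_cast
    ring_nf

lemma cq_natCast_of_coprime {q n : ℕ} (hco : n.Coprime q) : cq q n = μ q := by
  rcases q.eq_zero_or_pos with rfl | hq
  · simp [cq]
  have hinv := (sum_eq_iff_sum_smul_moebius_eq.mp fun d (_ : 0 < d) => sum_divisors_cq d n) q hq
  rw [← hinv, sum_eq_single (q, 1)]
  · simp
  · rintro ⟨a, b⟩ hab hne
    rw [Nat.mem_divisorsAntidiagonal] at hab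
    have hb : ¬ (b : ℤ) ∣ n := fun hbn => hne <| by
      have hb1 : b = 1 := Nat.eq_one_of_dvd_coprimes hco.symm ⟨a, by rw [← hab.1, mul_comm]⟩
        (Int.natCast_dvd_natCast.mp hbn)
      rw [hb1, mul_one] at hab
      rw [← hab.1, hb1]
    simp [hb]
  · exact fun h => absurd (Nat.mem_divisorsAntidiagonal.mpr ⟨mul_one q, hq.ne'⟩) h

lemma sum_Icc_filter_dvd {M : Type*} [AddCommMonoid M] {e : ℕ} (he : 0 < e) (N : ℕ) (f : ℕ → M) :
    ∑ d ∈ Icc 1 N with e ∣ d, f d = ∑ t ∈ Icc 1 (N / e), f (e * t) := by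
  have himage : {d ∈ Icc 1 N | e ∣ d} = (Icc 1 (N / e)).image (e * ·) := by
    ext d
    simp only [mem_filter, mem_Icc, mem_image, Nat.le_div_iff_mul_le he]
    constructor
    · rintro ⟨⟨hd1, hdN⟩, t, rfl⟩
      exact ⟨t, ⟨Nat.pos_of_mul_pos_left hd1, by rwa [mul_comm]⟩, rfl⟩
    · rintro ⟨t, ⟨ht1, htN⟩, rfl⟩
      exact ⟨⟨Nat.mul_pos he ht1, by rwa [mul_comm]⟩, dvd_mul_right e t⟩
  rw [himage, sum_image fun _ _ _ _ h => Nat.eq_of_mul_eq_mul_left he h]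

lemma lamHat_eq_sum_multiples (N : ℕ) {e : ℕ} (he : 0 < e) :
    LamHat N e = ∑ d ∈ Icc 1 N with e ∣ d, -(μ d : ℝ) * Real.log d / d := by
  rw [sum_Icc_filter_dvd he, ← sum_filter_add_sum_filter_not _ (fun t => t.Coprime e)]
  have hnot : ∑ t ∈ Icc 1 (N / e) with ¬ t.Coprime e,
      -(μ (e * t) : ℝ) * Real.log (e * t : ℕ) / (e * t : ℕ) = 0 := by
    refine sum_eq_zero fun t ht => ?_
    have : ¬ Squarefree (e * t) := fun hsq =>
      (mem_filter.mp ht).2 (Nat.squarefree_mul_iff.mp hsq).1.symm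
    simp [moebius_eq_zero_of_not_squarefree this]
  rw [hnot, add_zero, LamHat, mul_sum]
  refine sum_congr rfl fun t ht => ?_
  obtain ⟨ht, hco⟩ := mem_filter.mp ht
  have : (t : ℝ) ≠ 0 := by exact_mod_cast (Nat.one_le_iff_ne_zero.mp (mem_Icc.mp ht).1)
  have : (e : ℝ) ≠ 0 := by exact_mod_cast he.ne'
  rw [isMultiplicative_moebius.map_mul_of_coprime hco.symm]
  push_cast
  rw [mul_comm (t : ℝ)]
  field_simp

lemma lamN_eq_sum_lamHat_mul_cq (N m : ℕ) :
    (LamN N m : ℂ) = ∑ q ∈ Icc 1 N, (LamHat N q : ℂ) * cq q m := by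
  have hdiv (d : ℕ) (hd : d ∈ Icc 1 N) : -(μ d : ℂ) * Real.log d / d * ∑ e ∈ d.divisors, cq e m
      = if d ∣ m then -(μ d : ℂ) * Real.log d else 0 := by
    have : (d : ℂ) ≠ 0 := by exact_mod_cast (Nat.one_le_iff_ne_zero.mp (mem_Icc.mp hd).1)
    simp only [sum_divisors_cq, Int.natCast_dvd_natCast]
    split_ifs
    · field_simp
    · rw [mul_zero]
  calc (LamN N m : ℂ)
      = ∑ d ∈ Icc 1 N, -(μ d : ℂ) * Real.log d / d * ∑ e ∈ d.divisors, cq e m := by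
        rw [sum_congr rfl hdiv, ← sum_filter, LamN]
        push_cast
        rw [← sum_neg_distrib]
        simp only [neg_mul]
    _ = ∑ e ∈ Icc 1 N, (∑ d ∈ Icc 1 N with e ∣ d, -(μ d : ℂ) * Real.log d / d) * cq e m := by
        simp only [mul_sum, sum_mul]
        refine sum_comm' fun d e => ?_
        simp only [mem_Icc, Nat.mem_divisors, mem_filter]
        constructor
        · rintro ⟨⟨hd1, hdN⟩, hed, -⟩
          exact ⟨⟨⟨hd1, hdN⟩, hed⟩, Nat.pos_of_dvd_of_pos hed hd1,
            (Nat.le_of_dvd hd1 hed).trans hdN⟩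
        · rintro ⟨⟨⟨hd1, hdN⟩, hed⟩, -⟩
          exact ⟨⟨hd1, hdN⟩, hed, by omega⟩
    _ = ∑ e ∈ Icc 1 N, (LamHat N e : ℂ) * cq e m := by
        refine sum_congr rfl fun e he => ?_
        rw [lamHat_eq_sum_multiples N (mem_Icc.mp he).1]
        push_cast
        rfl

lemma exists_mem_Icc_mod_eq {q : ℕ} (hq : 0 < q) (n : ℕ) : ∃ k ∈ Icc 1 q, k % q = n % q := by
  by_cases hn : n % q = 0
  · exact ⟨q, mem_Icc.mpr ⟨hq, le_rfl⟩, by rw [Nat.mod_self, hn]⟩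
  · exact ⟨n % q, mem_Icc.mpr ⟨Nat.pos_of_ne_zero hn, (Nat.mod_lt n hq).le⟩, Nat.mod_mod n q⟩

lemma mod_injOn_Icc (q : ℕ) : Set.InjOn (· % q) (Icc 1 q : Set ℕ) := by
  intro a ha b hb hab
  simp only [coe_Icc, Set.mem_Icc] at ha hb
  rcases ha.2.lt_or_eq with ha' | rfl <;> rcases hb.2.lt_or_eq with hb' | rfl
  · simpa only [Nat.mod_eq_of_lt ha', Nat.mod_eq_of_lt hb'] using hab
  · simp only [Nat.mod_eq_of_lt ha', Nat.mod_self] at hab; omega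
  · simp only [Nat.mod_eq_of_lt hb', Nat.mod_self] at hab; omega
  · rfl

lemma sum_Zstar_psi_mul {q : ℕ} (hq : 0 < q) (N : ℕ) {f : ℕ → ℂ}
    (hf : ∀ a b, a ≡ b [MOD q] → f a = f b) :
    ∑ k ∈ Zstar q, (psi N q k : ℂ) * f k = ∑ n ∈ Icc 1 N with n.Coprime q, (Λ n : ℂ) * f n := by
  have hclass (k : ℕ) :
      (psi N q k : ℂ) * f k = ∑ n ∈ Icc 1 N with n ≡ k [MOD q], (Λ n : ℂ) * f n := by
    rw [psi, Complex.ofReal_sum, sum_mul]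
    exact sum_congr rfl fun n hn => by rw [hf n k (mem_filter.mp hn).2]
  have hunion : (Zstar q).biUnion (fun k => {n ∈ Icc 1 N | n ≡ k [MOD q]})
      = {n ∈ Icc 1 N | n.Coprime q} := by
    ext n
    simp only [Zstar, mem_biUnion, mem_filter]
    constructor
    · rintro ⟨k, ⟨-, hk⟩, hn, hnk⟩
      exact ⟨hn, (Nat.ModEq.gcd_eq hnk).trans hk⟩
    · rintro ⟨hn, hco⟩
      obtain ⟨k, hk, hkn⟩ := exists_mem_Icc_mod_eq hq n
      exact ⟨k, ⟨hk, (Nat.ModEq.gcd_eq hkn).trans hco⟩, hn, hkn.symm⟩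
  have hdisj : (Zstar q : Set ℕ).PairwiseDisjoint (fun k => {n ∈ Icc 1 N | n ≡ k [MOD q]}) := by
    intro k hk k' hk' hne
    refine disjoint_left.mpr fun n hn hn' => hne ?_
    exact mod_injOn_Icc q (mem_filter.mp hk).1 (mem_filter.mp hk').1
      (((mem_filter.mp hn).2).symm.trans (mem_filter.mp hn').2)
  rw [sum_congr rfl fun k _ => hclass k, ← sum_biUnion hdisj, hunion]

noncomputable def deltaTerm (N h n q : ℕ) : ℂ :=
  (Λ n : ℂ) * (LamHat N q : ℂ) * (cq q ((n : ℤ) + h) - cq q n * cq q h / (Nat.totient q : ℂ))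

lemma delta_eq_sum_coprime (N h : ℕ) :
    Delta N h = ∑ q ∈ Icc 1 N, ∑ n ∈ Icc 1 N with n.Coprime q, deltaTerm N h n q := by
  refine sum_congr rfl fun q hq => ?_
  have hq : 0 < q := (mem_Icc.mp hq).1
  have hdev : ∀ a b, a ≡ b [MOD q] → dev h q a = dev h q b := fun a b hab => by
    rw [dev, dev, cq_eq_of_modEq ((Int.natCast_modEq_iff.mpr hab).add_right h)]
  rw [sum_Zstar_psi_mul hq N hdev, mul_sum]
  refine sum_congr rfl fun n hn => ?_
  rw [deltaTerm, dev, cq_natCast_of_coprime (mem_filter.mp hn).2]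
  ring

lemma sum_sum_deltaTerm (N h : ℕ) :
    ∑ q ∈ Icc 1 N, ∑ n ∈ Icc 1 N, deltaTerm N h n q = (corr N h : ℂ) -
      ∑ q ∈ Icc 1 N, (LamHat N q : ℂ) / (Nat.totient q : ℂ) * cq q h *
        ∑ n ∈ Icc 1 N, (Λ n : ℂ) * cq q n := by
  simp only [deltaTerm, mul_sub, sum_sub_distrib, corr, Complex.ofReal_sum, Complex.ofReal_mul,
    lamN_eq_sum_lamHat_mul_cq, mul_sum]
  congr 1
  · rw [sum_comm]
    push_cast
    exact sum_congr rfl fun n _ => sum_congr rfl fun q _ => by ring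
  · exact sum_congr rfl fun q _ => sum_congr rfl fun n _ => by ring

lemma RR_eq_sum_not_coprime (N h : ℕ) :
    RR N h = ∑ q ∈ Icc 1 N, ∑ n ∈ Icc 1 N with ¬ n.Coprime q, deltaTerm N h n q := by
  refine sum_comm' fun n q => ?_
  simp only [mem_filter, mem_Icc, Nat.Coprime]
  constructor
  · rintro ⟨hn, hq, hgcd⟩
    exact ⟨⟨hn, by omega⟩, hq⟩
  · rintro ⟨⟨hn, hgcd⟩, hq⟩
    exact ⟨hn, hq, by have := Nat.gcd_pos_of_pos_left q hn.1; omega⟩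

theorem stmt9_general (N h : ℕ) :
    Delta N h = (corr N h : ℂ) -
      (∑ q ∈ Finset.Icc 1 N, (LamHat N q : ℂ) / (Nat.totient q : ℂ) * cq q (h : ℤ) *
        ∑ n ∈ Finset.Icc 1 N, (ArithmeticFunction.vonMangoldt n : ℂ) * cq q (n : ℤ)) -
      RR N h := by
  rw [delta_eq_sum_coprime, RR_eq_sum_not_coprime, ← sum_sum_deltaTerm, eq_sub_iff_add_eq,
    ← sum_add_distrib]
  exact sum_congr rfl fun q _ => sum_filter_add_sum_filter_not _ _ _

/-- the decomposition
`Δ(N,h) = C_{Λ,Λ_N}(N,h) − ∑_{q ≤ N} (Λ̂_N(q)/φ(q)) c_q(h) ∑_{n ≤ N} Λ(n) c_q(n) − ℛ(N,h)`. -/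
theorem stmt9 (N h : ℕ) (hN : 1 ≤ N) (hh : 1 ≤ h) :
    Delta N h = (corr N h : ℂ) -
      (∑ q ∈ Finset.Icc 1 N, (LamHat N q : ℂ) / (Nat.totient q : ℂ) * cq q (h : ℤ) *
        ∑ n ∈ Finset.Icc 1 N, (ArithmeticFunction.vonMangoldt n : ℂ) * cq q (n : ℤ)) -
      RR N h :=
  stmt9_general N h
end

section
/- Let q, r ∈ ℕ with gcd(q, r) = 1, q ≥ 2 and r ≥ 2. Then ∑_{N=1}^{qr} ∑_{k ∈ ℤ_q^*} S_N(q,k;r) = 0; equivalently, ∑_{N=1}^{qr} ∑_{n ≤ N, gcd(n,q)=1} c_r(n) = 0. -/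
open Finset

/-!
Put `P = qr` and `F(n) = c_r(n)` for `n` coprime to `q`, `F(n) = 0` otherwise. Summation by parts
gives `∑_{N ≤ P} ∑_{n ≤ N} F(n) = (P + 1) ∑_{n ≤ P} F(n) - ∑_{n ≤ P} n F(n)`. Since `c_r` is
even and `r`-periodic, `F(P - n) = F(n)`, so the weighted sum is `P/2` times the plain one.
The plain sum vanishes: expanding `c_r`, each primitive `r`-th root of unity `ζ` contributes
`∑_{n < qr} [(n,q) = 1] ζ^n`, which the substitution `n = a + qb` factors as
`(∑_{a < q} [(a,q) = 1] ζ^a) (∑_{b < r} (ζ^q)^b)`, and `ζ^q` is again primitive since `(q,r) = 1`.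
Sorting `n` by its residue mod `q` turns the first sum of the statement into the second.
-/

open Complex

theorem sum_Icc_one_eq_sum_range_succ {M : Type*} [AddCommMonoid M] {g : ℕ → M} (hg : g 0 = 0)
    (P : ℕ) : ∑ n ∈ Icc 1 P, g n = ∑ n ∈ range (P + 1), g n := by
  rw [Nat.range_succ_eq_Icc_zero, ← sum_Ioc_add_eq_sum_Icc (Nat.zero_le P), hg, add_zero]
  rfl

theorem sum_Icc_one_sum_Icc_one {M : Type*} [AddCommMonoid M] (f : ℕ → M) (P : ℕ) :
    ∑ N ∈ Icc 1 P, ∑ n ∈ Icc 1 N, f n = ∑ n ∈ Icc 1 P, (P + 1 - n) • f n := by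
  rw [sum_comm' (t' := Icc 1 P) (s' := fun n => Icc n P) (fun N n => by simp only [mem_Icc]; omega)]
  simp [Nat.card_Icc]

theorem two_mul_sum_range_succ_mul_of_symm {R : Type*} [CommRing R] {F : ℕ → R} {P : ℕ}
    (hsym : ∀ n ≤ P, F (P - n) = F n) :
    2 * ∑ n ∈ range (P + 1), (n : R) * F n = P * ∑ n ∈ range (P + 1), F n := by
  have hreflect : ∑ n ∈ range (P + 1), (n : R) * F n
      = ∑ n ∈ range (P + 1), ((P : R) - n) * F n := by
    rw [← sum_range_reflect]
    refine sum_congr rfl fun n hn => ?_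
    have hn : n ≤ P := Nat.lt_succ_iff.mp (mem_range.mp hn)
    rw [show P + 1 - 1 - n = P - n by omega, hsym n hn, Nat.cast_sub hn]
  rw [two_mul]
  nth_rewrite 2 [hreflect]
  rw [← sum_add_distrib, mul_sum]
  exact sum_congr rfl fun n _ => by ring

theorem sum_Icc_one_sum_Icc_one_eq_zero_of_symm {K : Type*} [Field K] [CharZero K] {F : ℕ → K}
    {P : ℕ} (h0 : F 0 = 0) (hsym : ∀ n ≤ P, F (P - n) = F n)
    (hsum : ∑ n ∈ range (P + 1), F n = 0) :
    ∑ N ∈ Icc 1 P, ∑ n ∈ Icc 1 N, F n = 0 := by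
  have hweighted : ∑ n ∈ range (P + 1), (n : K) * F n = 0 := by
    have h := two_mul_sum_range_succ_mul_of_symm hsym
    rw [hsum, mul_zero] at h
    exact (mul_eq_zero.mp h).resolve_left two_ne_zero
  rw [sum_Icc_one_sum_Icc_one, sum_Icc_one_eq_sum_range_succ (by simp [h0])]
  calc ∑ n ∈ range (P + 1), (P + 1 - n) • F n
      = ∑ n ∈ range (P + 1), (((P : K) + 1) * F n - n * F n) := by
        refine sum_congr rfl fun n hn => ?_
        rw [nsmul_eq_mul, Nat.cast_sub (mem_range.mp hn).le]
        push_cast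
        ring
    _ = 0 := by rw [sum_sub_distrib, ← mul_sum, hsum, hweighted, mul_zero, sub_zero]

theorem sum_range_mul_eq_sum_sum {M : Type*} [AddCommMonoid M] (g : ℕ → M) (q r : ℕ) :
    ∑ n ∈ range (q * r), g n = ∑ b ∈ range r, ∑ a ∈ range q, g (q * b + a) := by
  induction r with
  | zero => simp
  | succ r ih => rw [mul_add_one, sum_range_add, ih, sum_range_succ]

theorem sum_range_mul_periodic_mul_pow_eq_zero {R : Type*} [CommRing R] [IsDomain R] {ζ : R}
    {q r : ℕ} (hζ : IsPrimitiveRoot ζ r) (hr : 1 < r) (hqr : q.Coprime r) {f : ℕ → R}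
    (hf : Function.Periodic f q) :
    ∑ n ∈ range (q * r), f n * ζ ^ n = 0 := by
  have hgeom : ∑ b ∈ range r, (ζ ^ q) ^ b = 0 := (hζ.pow_of_coprime q hqr).geom_sum_eq_zero hr
  rw [sum_range_mul_eq_sum_sum]
  calc ∑ b ∈ range r, ∑ a ∈ range q, f (q * b + a) * ζ ^ (q * b + a)
      = ∑ b ∈ range r, ∑ a ∈ range q, (ζ ^ q) ^ b * (f a * ζ ^ a) := by
        refine sum_congr rfl fun b _ => sum_congr rfl fun a _ => ?_
        have hper : f (q * b + a) = f a := by simpa [mul_comm, add_comm] using hf.nat_mul b a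
        rw [hper, pow_add, pow_mul]
        ring
    _ = 0 := by simp_rw [← mul_sum, ← sum_mul, hgeom, zero_mul]

theorem mem_Zstar_iff {q k : ℕ} (hq : q ≠ 1) : k ∈ Zstar q ↔ k < q ∧ k.Coprime q := by
  simp only [Zstar, mem_filter, mem_Icc]
  constructor
  · rintro ⟨⟨-, hkq⟩, hcop⟩
    refine ⟨lt_of_le_of_ne hkq fun h => ?_, hcop⟩
    rw [h, Nat.coprime_self] at hcop
    exact hq hcop
  · rintro ⟨hkq, hcop⟩
    refine ⟨⟨Nat.one_le_iff_ne_zero.mpr fun h => ?_, hkq.le⟩, hcop⟩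
    rw [h, Nat.coprime_zero_left] at hcop
    exact hq hcop

theorem cq_natCast (r n : ℕ) :
    cq r n = ∑ j ∈ Zstar r, exp (2 * Real.pi * I * (j / r)) ^ n := by
  refine sum_congr rfl fun j _ => ?_
  rw [← exp_nat_mul]
  congr 1
  push_cast
  ring

theorem cq_add_mul_self (r : ℕ) (n k : ℤ) : cq r (n + r * k) = cq r n := by
  refine sum_congr rfl fun j hj => ?_
  have hr : (r : ℂ) ≠ 0 := by
    have := (mem_Icc.mp (mem_filter.mp hj).1)
    exact_mod_cast (by omega : r ≠ 0)
  rw [exp_eq_exp_iff_exists_int]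
  exact ⟨j * k, by field_simp; push_cast; ring⟩

theorem cq_neg {r : ℕ} (hr : 1 < r) (n : ℤ) : cq r (-n) = cq r n := by
  have hS : ∀ j ∈ Zstar r, 1 ≤ j ∧ j < r ∧ j.Coprime r := fun j hj =>
    ⟨(mem_Icc.mp (mem_filter.mp hj).1).1, (mem_Zstar_iff hr.ne').mp hj⟩
  have hmem : ∀ j ∈ Zstar r, r - j ∈ Zstar r := fun j hj => by
    obtain ⟨h1, h2, hcop⟩ := hS j hj
    exact (mem_Zstar_iff hr.ne').mpr ⟨by omega, (Nat.coprime_self_sub_left h2.le).mpr hcop⟩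
  refine sum_nbij' (r - ·) (r - ·) hmem hmem (fun j hj => ?_) (fun j hj => ?_) (fun j hj => ?_)
  · have := hS j hj; omega
  · have := hS j hj; omega
  · obtain ⟨-, h2, -⟩ := hS j hj
    have hr0 : (r : ℂ) ≠ 0 := by exact_mod_cast (by omega : r ≠ 0)
    rw [exp_eq_exp_iff_exists_int]
    refine ⟨-n, ?_⟩
    simp only [Nat.cast_sub h2.le]
    field_simp
    push_cast
    ring

theorem cq_mul_self_sub {r : ℕ} (hr : 1 < r) (k n : ℤ) : cq r (r * k - n) = cq r n := by
  rw [sub_eq_neg_add, cq_add_mul_self, cq_neg hr]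

theorem SN_eq_sum_filter_mod {N q k : ℕ} (hk : k < q) (r : ℕ) :
    SN N q k r = ∑ n ∈ (Icc 1 N).filter (· % q = k), cq r n := by
  unfold SN
  congr 1
  ext n
  simp only [mem_filter, ← Int.natCast_mod, Nat.mod_eq_of_lt hk, Int.natCast_inj]

theorem sum_Zstar_SN {q : ℕ} (hq : 1 < q) (N r : ℕ) :
    ∑ k ∈ Zstar q, SN N q k r = ∑ n ∈ (Icc 1 N).filter (fun n => n.Coprime q), cq r n := by
  rw [sum_congr rfl fun k hk => SN_eq_sum_filter_mod ((mem_Zstar_iff hq.ne').mp hk).1 r,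
    sum_fiberwise_eq_sum_filter]
  simp only [mem_Zstar_iff hq.ne', Nat.mod_lt _ (zero_lt_one.trans hq), true_and,
    ZMod.coprime_mod_iff_coprime]

noncomputable def cqCoprime (q r n : ℕ) : ℂ := if n.Coprime q then cq r n else 0

theorem cqCoprime_zero {q : ℕ} (hq : q ≠ 1) (r : ℕ) : cqCoprime q r 0 = 0 :=
  if_neg (by rwa [Nat.coprime_zero_left])

theorem cqCoprime_mul_sub {q r n : ℕ} (hr : 1 < r) (hn : n ≤ q * r) :
    cqCoprime q r (q * r - n) = cqCoprime q r n := by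
  have hcop : (q * r - n).Coprime q ↔ n.Coprime q := by
    rw [← Nat.isCoprime_iff_coprime, ← Nat.isCoprime_iff_coprime, Nat.cast_sub hn, sub_eq_neg_add,
      Nat.cast_mul, IsCoprime.add_mul_left_left_iff, IsCoprime.neg_left_iff]
  have hcq : cq r ((q * r - n : ℕ) : ℤ) = cq r n := by
    rw [Nat.cast_sub hn, Nat.cast_mul, mul_comm, cq_mul_self_sub hr]
  simp only [cqCoprime, hcop, hcq]

theorem sum_range_cqCoprime {q r : ℕ} (hr : 1 < r) (hqr : q.Coprime r) :
    ∑ n ∈ range (q * r), cqCoprime q r n = 0 := by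
  have hper : Function.Periodic (fun n : ℕ => if n.Coprime q then (1 : ℂ) else 0) q := fun n => by
    simp only [Nat.coprime_add_self_left]
  have hexpand : ∀ n, cqCoprime q r n = ∑ j ∈ Zstar r,
      (if n.Coprime q then (1 : ℂ) else 0) * exp (2 * Real.pi * I * (j / r)) ^ n := fun n => by
    rw [cqCoprime, cq_natCast, ← mul_sum, ite_mul, one_mul, zero_mul]
  rw [sum_congr rfl fun n _ => hexpand n, sum_comm]
  refine sum_eq_zero fun j hj => sum_range_mul_periodic_mul_pow_eq_zero ?_ hr hqr hper
  exact isPrimitiveRoot_exp_of_coprime j r (by omega) (mem_filter.mp hj).2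

/-- for coprime `q, r ≥ 2`,
`∑_{N=1}^{qr} ∑_{k ∈ ℤ_q^*} S_N(q,k;r) = 0`; equivalently
`∑_{N=1}^{qr} ∑_{n ≤ N, (n,q)=1} c_r(n) = 0`. -/
theorem stmt19 (q r : ℕ) (hq : 2 ≤ q) (hr : 2 ≤ r) (hqr : Nat.Coprime q r) :
    (∑ N ∈ Finset.Icc 1 (q * r), ∑ k ∈ Zstar q, SN N q (k : ℤ) r = 0) ∧
    (∑ N ∈ Finset.Icc 1 (q * r),
      ∑ n ∈ (Finset.Icc 1 N).filter (fun n => Nat.Coprime n q), cq r (n : ℤ) = 0) := by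
  have hsym : ∀ n ≤ q * r, cqCoprime q r (q * r - n) = cqCoprime q r n :=
    fun n hn => cqCoprime_mul_sub hr hn
  have hsum : ∑ n ∈ range (q * r + 1), cqCoprime q r n = 0 := by
    have hlast : cqCoprime q r (q * r) = cqCoprime q r 0 := hsym 0 (Nat.zero_le _)
    rw [sum_range_succ, sum_range_cqCoprime hr hqr, hlast, cqCoprime_zero (by omega), add_zero]
  have hpart2 : ∑ N ∈ Icc 1 (q * r), ∑ n ∈ (Icc 1 N).filter (fun n => n.Coprime q), cq r n = 0 := by
    simpa only [sum_filter, cqCoprime] using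
      sum_Icc_one_sum_Icc_one_eq_zero_of_symm (cqCoprime_zero (by omega) r) hsym hsum
  exact ⟨by simpa only [sum_Zstar_SN hq] using hpart2, hpart2⟩
end
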